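/- Let n ∈ ℤ_{≥0}^r, 1 ≤ k ≤ r with n_k ≥ 1, and assume n and n − e_k are normal. Then Φ*_n(z) = Φ*_{n−e_k}(z) + β_n z Φ_{n−e_k}(z), where β_n is the coefficient of z^{|n|} in Φ*_n; in particular, the recurrence coefficient β_n is independent of k. -/

import Mathlib

open MeasureTheory Polynomial

noncomputable section

/-- A system of measures on the unit circle: each `μ j` is a probability measure,
carried by the unit circle `∂𝔻 = {z : |z| = 1}`, with infinite support. -/
def MopucSystem {r : ℕ} (μ : Fin r → Measure ℂ) : Prop :=
  ∀ j, IsProbabilityMeasure (μ j) ∧ μ j ((Metric.sphere (0 : ℂ) 1)ᶜ) = 0 ∧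
    ∀ s : Set ℂ, s.Finite → μ j (sᶜ) ≠ 0

/-- The inner product `⟨P, Q⟩_μ = ∫ P(z)·conj (Q(z)) dμ(z)`. -/
def pip (μ : Measure ℂ) (P Q : Polynomial ℂ) : ℂ :=
  ∫ z, P.eval z * (starRingEnd ℂ) (Q.eval z) ∂μ

/-- `⟨P, z^p⟩_μ`. -/
def mip (μ : Measure ℂ) (P : Polynomial ℂ) (p : ℕ) : ℂ :=
  pip μ P (X ^ p)

/-- The moment `ν^p = ∫ z^p dμ(z)` for `p ∈ ℤ` (on the circle `z^{-m} = conj (z^m)`). -/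
def mom (μ : Measure ℂ) (p : ℤ) : ℂ :=
  ∫ z, z ^ p ∂μ

/-- The linear position of the pair `(j, q)` (with `q < n j`): `(∑_{i<j} n i) + q`.
This enumerates the pairs, in lexicographic order, by `0, 1, …, |n| − 1`. -/
def linIdx {r : ℕ} (n : Fin r → ℕ) (c : (j : Fin r) × Fin (n j)) : ℕ :=
  (∑ i ∈ Finset.univ.filter (fun i => i < c.1), n i) + (c.2 : ℕ)

/-- The moment matrix `M_n`: rows are indexed by pairs `(j, q)` with `1 ≤ j ≤ r`,
`0 ≤ q ≤ n j − 1`, columns by `p = 0, …, |n| − 1` (realized as pairs via the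
order-preserving enumeration `linIdx`), and the entry at `((j,q), p)` is `ν_j^{p−q}`. -/
def Mmat {r : ℕ} (μ : Fin r → Measure ℂ) (n : Fin r → ℕ) :
    Matrix ((j : Fin r) × Fin (n j)) ((j : Fin r) × Fin (n j)) ℂ :=
  Matrix.of fun rq c => mom (μ rq.1) ((linIdx n c : ℤ) - ((rq.2 : ℕ) : ℤ))

/-- The index `n` is normal if `det M_n ≠ 0`.  (For `n = 0` the matrix is empty and its
determinant is `1`, so `n = 0` is normal, matching the convention of the paper.) -/
def NormalIndex {r : ℕ} (μ : Fin r → Measure ℂ) (n : Fin r → ℕ) : Prop :=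
  (Mmat μ n).det ≠ 0

/-- A type II multiple orthogonal polynomial for the multi-index `n`. -/
def IsTypeII {r : ℕ} (μ : Fin r → Measure ℂ) (n : Fin r → ℕ) (P : Polynomial ℂ) : Prop :=
  P ≠ 0 ∧ P.degree ≤ ((∑ j, n j : ℕ) : WithBot ℕ) ∧
    ∀ j, ∀ p : ℕ, p < n j → mip (μ j) P p = 0

/-- A type II* multiple orthogonal polynomial for the multi-index `n`. -/
def IsTypeIIStar {r : ℕ} (μ : Fin r → Measure ℂ) (n : Fin r → ℕ) (P : Polynomial ℂ) : Prop :=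
  P ≠ 0 ∧ P.degree ≤ ((∑ j, n j : ℕ) : WithBot ℕ) ∧
    ∀ j, ∀ p : ℕ, 1 ≤ p → p ≤ n j → mip (μ j) P p = 0

/-- A type I multiple orthogonal polynomial for the multi-index `n`:
a nonzero vector of polynomials with `deg (L j) ≤ n j − 1` (so `L j = 0` when `n j = 0`),
and `∑_j ⟨L j, z^p⟩_j = 0` for `p = 0, …, |n| − 2`. -/
def IsTypeI {r : ℕ} (μ : Fin r → Measure ℂ) (n : Fin r → ℕ) (L : Fin r → Polynomial ℂ) : Prop :=
  L ≠ 0 ∧ (∀ j, (L j).degree < ((n j : ℕ) : WithBot ℕ)) ∧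
    ∀ p : ℕ, p + 2 ≤ ∑ j, n j → ∑ j, mip (μ j) (L j) p = 0

/-- A type I* multiple orthogonal polynomial for the multi-index `n`:
a nonzero vector of polynomials with `deg (L j) ≤ n j − 1`,
and `∑_j ⟨L j, z^p⟩_j = 0` for `p = 1, …, |n| − 1`. -/
def IsTypeIStar {r : ℕ} (μ : Fin r → Measure ℂ) (n : Fin r → ℕ) (L : Fin r → Polynomial ℂ) : Prop :=
  L ≠ 0 ∧ (∀ j, (L j).degree < ((n j : ℕ) : WithBot ℕ)) ∧
    ∀ p : ℕ, 1 ≤ p → p + 1 ≤ ∑ j, n j → ∑ j, mip (μ j) (L j) p = 0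

/-- `Φ_n`: the monic type II polynomial of degree exactly `|n|`. -/
def IsPhi {r : ℕ} (μ : Fin r → Measure ℂ) (n : Fin r → ℕ) (P : Polynomial ℂ) : Prop :=
  IsTypeII μ n P ∧ P.Monic ∧ P.natDegree = ∑ j, n j

/-- `Φ*_n`: the type II* polynomial with `Φ*_n(0) = 1`. -/
def IsPhiStar {r : ℕ} (μ : Fin r → Measure ℂ) (n : Fin r → ℕ) (P : Polynomial ℂ) : Prop :=
  IsTypeIIStar μ n P ∧ P.eval 0 = 1

/-- `Λ_n`: the type I vector normalized by `∑_j ⟨Λ_{n,j}, z^{|n|−1}⟩_j = 1`. -/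
def IsLambda {r : ℕ} (μ : Fin r → Measure ℂ) (n : Fin r → ℕ) (L : Fin r → Polynomial ℂ) : Prop :=
  IsTypeI μ n L ∧ ∑ j, mip (μ j) (L j) ((∑ i, n i) - 1) = 1

/-- `Λ*_n`: the type I* vector normalized by `∑_j ⟨Λ*_{n,j}, 1⟩_j = 1`. -/
def IsLambdaStar {r : ℕ} (μ : Fin r → Measure ℂ) (n : Fin r → ℕ) (L : Fin r → Polynomial ℂ) : Prop :=
  IsTypeIStar μ n L ∧ ∑ j, mip (μ j) (L j) 0 = 1

/-- The multi-index `n + e_k`. -/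
def eAdd {r : ℕ} (n : Fin r → ℕ) (k : Fin r) : Fin r → ℕ :=
  Function.update n k (n k + 1)

/-- The multi-index `n − e_k` (used only when `n k ≥ 1`). -/
def eSub {r : ℕ} (n : Fin r → ℕ) (k : Fin r) : Fin r → ℕ :=
  Function.update n k (n k - 1)

lemma ae_sphere {r : ℕ} {μ : Fin r → Measure ℂ} (hμ : MopucSystem μ) (j : Fin r) :
    ∀ᵐ z ∂(μ j), ‖z‖ = 1 := by
  have h := (hμ j).2.1
  rw [MeasureTheory.ae_iff]
  convert h using 2
  ext z
  simp [Metric.sphere, dist_zero_right]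

lemma integrable_aux {r : ℕ} {μ : Fin r → Measure ℂ} (hμ : MopucSystem μ) (j : Fin r)
    (s p : ℕ) : Integrable (fun z : ℂ => z ^ s * (starRingEnd ℂ) z ^ p) (μ j) := by
  have h1 : IsProbabilityMeasure (μ j) := (hμ j).1
  refine Integrable.mono' (integrable_const 1) ?_ ?_
  · exact Continuous.aestronglyMeasurable (by continuity)
  · filter_upwards [ae_sphere hμ j] with z hz
    simp [norm_pow, hz]

lemma mip_eq_sum {r : ℕ} {μ : Fin r → Measure ℂ} (hμ : MopucSystem μ) (j : Fin r)
    (P : Polynomial ℂ) (p : ℕ) (N : ℕ) (hN : P.natDegree < N) :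
    mip (μ j) P p = ∑ s ∈ Finset.range N, P.coeff s * mom (μ j) ((s : ℤ) - p) := by
  unfold mip pip
  have key : ∀ z : ℂ, P.eval z * (starRingEnd ℂ) ((X ^ p : Polynomial ℂ).eval z)
      = ∑ s ∈ Finset.range N, P.coeff s * (z ^ s * (starRingEnd ℂ) z ^ p) := by
    intro z
    rw [Polynomial.eval_pow, Polynomial.eval_X, map_pow, Polynomial.eval_eq_sum_range' hN,
      Finset.sum_mul]
    exact Finset.sum_congr rfl fun s _ => by ring
  simp_rw [key]
  rw [MeasureTheory.integral_finset_sum _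
    (fun s _ => (integrable_aux hμ j s p).const_mul _)]
  refine Finset.sum_congr rfl fun s _ => ?_
  rw [integral_const_mul]
  congr 1
  refine MeasureTheory.integral_congr_ae ?_
  filter_upwards [ae_sphere hμ j] with z hz
  have hz0 : z ≠ 0 := by
    intro h; rw [h] at hz; simp at hz
  have hconj : (starRingEnd ℂ) z = z⁻¹ := by
    have : z * (starRingEnd ℂ) z = 1 := by
      rw [Complex.mul_conj]
      norm_cast
      rw [Complex.normSq_eq_norm_sq]
      simp [hz]
    field_simp
    linear_combination this
  rw [hconj, inv_pow, ← zpow_natCast z s, ← zpow_natCast z p, ← zpow_neg,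
    ← zpow_add₀ hz0, sub_eq_add_neg]

lemma mip_sub {r : ℕ} {μ : Fin r → Measure ℂ} (hμ : MopucSystem μ) (j : Fin r)
    (P Q : Polynomial ℂ) (p : ℕ) :
    mip (μ j) (P - Q) p = mip (μ j) P p - mip (μ j) Q p := by
  set N := max P.natDegree Q.natDegree + 1 with hNdef
  have h1 : P.natDegree < N := by omega
  have h2 : Q.natDegree < N := by omega
  have h3 : (P - Q).natDegree < N := by
    have := Polynomial.natDegree_sub_le P Q
    omega
  rw [mip_eq_sum hμ j _ p N h3, mip_eq_sum hμ j _ p N h1, mip_eq_sum hμ j _ p N h2,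
    ← Finset.sum_sub_distrib]
  exact Finset.sum_congr rfl fun s _ => by rw [Polynomial.coeff_sub]; ring

lemma mip_C_mul {r : ℕ} {μ : Fin r → Measure ℂ} (hμ : MopucSystem μ) (j : Fin r)
    (a : ℂ) (P : Polynomial ℂ) (p : ℕ) :
    mip (μ j) (C a * P) p = a * mip (μ j) P p := by
  set N := P.natDegree + 1 with hNdef
  have h1 : P.natDegree < N := by omega
  have h2 : (C a * P).natDegree < N := by
    have := Polynomial.natDegree_C_mul_le a P
    omega
  rw [mip_eq_sum hμ j _ p N h2, mip_eq_sum hμ j _ p N h1, Finset.mul_sum]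
  exact Finset.sum_congr rfl fun s _ => by rw [Polynomial.coeff_C_mul]; ring

lemma mip_X_mul {r : ℕ} {μ : Fin r → Measure ℂ} (hμ : MopucSystem μ) (j : Fin r)
    (P : Polynomial ℂ) (p : ℕ) :
    mip (μ j) (X * P) (p + 1) = mip (μ j) P p := by
  set N := P.natDegree + 1 with hNdef
  have h1 : P.natDegree < N := by omega
  have h2 : (X * P).natDegree < N + 1 := by
    have := Polynomial.natDegree_mul_le (p := (X : Polynomial ℂ)) (q := P)
    simp only [Polynomial.natDegree_X] at this
    omega
  rw [mip_eq_sum hμ j _ _ (N + 1) h2, mip_eq_sum hμ j _ p N h1,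
    Finset.sum_range_succ']
  simp only [Polynomial.coeff_X_mul, Polynomial.mul_coeff_zero, Polynomial.coeff_X_zero,
    zero_mul, add_zero]
  refine Finset.sum_congr rfl fun s _ => ?_
  congr 2
  push_cast
  ring

lemma linIdx_step {r : ℕ} (n : Fin r → ℕ) {j j' : Fin r} (h : j < j') :
    (∑ i ∈ Finset.univ.filter (fun i => i < j), n i) + n j
      ≤ ∑ i ∈ Finset.univ.filter (fun i => i < j'), n i := by
  have hsub : insert j (Finset.univ.filter (fun i => i < j))
      ⊆ Finset.univ.filter (fun i => i < j') := by
    intro i hi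
    simp only [Finset.mem_insert, Finset.mem_filter, Finset.mem_univ, true_and] at *
    rcases hi with rfl | hi
    · exact h
    · exact hi.trans h
  have hnot : j ∉ Finset.univ.filter (fun i => i < j) := by simp
  calc (∑ i ∈ Finset.univ.filter (fun i => i < j), n i) + n j
      = ∑ i ∈ insert j (Finset.univ.filter (fun i => i < j)), n i := by
        rw [Finset.sum_insert hnot]; ring
    _ ≤ _ := Finset.sum_le_sum_of_subset hsub

lemma linIdx_lt {r : ℕ} (n : Fin r → ℕ) (c : (j : Fin r) × Fin (n j)) :
    linIdx n c < ∑ i, n i := by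
  obtain ⟨j, q⟩ := c
  have h1 : (q : ℕ) < n j := q.2
  have h2 : (∑ i ∈ Finset.univ.filter (fun i => i < j), n i) + n j ≤ ∑ i, n i := by
    have hnot : j ∉ Finset.univ.filter (fun i => i < j) := by simp
    calc (∑ i ∈ Finset.univ.filter (fun i => i < j), n i) + n j
        = ∑ i ∈ insert j (Finset.univ.filter (fun i => i < j)), n i := by
          rw [Finset.sum_insert hnot]; ring
      _ ≤ _ := Finset.sum_le_sum_of_subset (Finset.subset_univ _)
  unfold linIdx
  simp only
  omega

lemma linIdx_strictMono {r : ℕ} (n : Fin r → ℕ) {j j' : Fin r}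
    (q : Fin (n j)) (q' : Fin (n j')) (h : j < j') :
    linIdx n ⟨j, q⟩ < linIdx n ⟨j', q'⟩ := by
  have h1 : (q : ℕ) < n j := q.2
  have := linIdx_step n h
  unfold linIdx
  simp only
  omega

lemma linIdx_injective {r : ℕ} (n : Fin r → ℕ) :
    Function.Injective (linIdx n) := by
  rintro ⟨j, q⟩ ⟨j', q'⟩ h
  have hjj : j = j' := by
    rcases lt_trichotomy j j' with h1 | h1 | h1
    · exact absurd h (by have := linIdx_strictMono n q q' h1; omega)
    · exact h1
    · exact absurd h (by have := linIdx_strictMono n q' q h1; omega)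
  subst hjj
  have hq : (q : ℕ) = q' := by
    unfold linIdx at h
    simp only at h
    omega
  exact congrArg _ (Fin.ext hq)

lemma linIdx_image {r : ℕ} (n : Fin r → ℕ) :
    Finset.univ.image (linIdx n) = Finset.range (∑ i, n i) := by
  apply Finset.eq_of_subset_of_card_le
  · intro p hp
    simp only [Finset.mem_image] at hp
    obtain ⟨c, _, rfl⟩ := hp
    exact Finset.mem_range.2 (linIdx_lt n c)
  · rw [Finset.card_range, Finset.card_image_of_injective _ (linIdx_injective n),
      Finset.card_univ, Fintype.card_sigma]
    simp

lemma sum_linIdx {r : ℕ} (n : Fin r → ℕ) {M : Type*} [AddCommMonoid M] (f : ℕ → M) :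
    ∑ c : (j : Fin r) × Fin (n j), f (linIdx n c) = ∑ p ∈ Finset.range (∑ i, n i), f p := by
  rw [← linIdx_image n, Finset.sum_image
    (fun x _ y _ h => linIdx_injective n h)]

lemma typeIIStar_unique {r : ℕ} {μ : Fin r → Measure ℂ} (hμ : MopucSystem μ)
    (m : Fin r → ℕ) (hnorm : NormalIndex μ m) (P Q : Polynomial ℂ)
    (hP : IsTypeIIStar μ m P) (hQ : IsTypeIIStar μ m Q) (h0 : P.eval 0 = Q.eval 0) :
    P = Q := by
  set N := ∑ j, m j with hN
  set D := P - Q with hD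
  have hdeg : D.degree ≤ (N : WithBot ℕ) :=
    (Polynomial.degree_sub_le P Q).trans (max_le hP.2.1 hQ.2.1)
  have hnatdeg : D.natDegree ≤ N := Polynomial.natDegree_le_iff_degree_le.2 hdeg
  have h00 : D.coeff 0 = 0 := by
    rw [hD, Polynomial.coeff_sub, Polynomial.coeff_zero_eq_eval_zero,
      Polynomial.coeff_zero_eq_eval_zero, h0, sub_self]
  have horth : ∀ j, ∀ p : ℕ, 1 ≤ p → p ≤ m j → mip (μ j) D p = 0 := by
    intro j p h1 h2
    rw [hD, mip_sub hμ, hP.2.2 j p h1 h2, hQ.2.2 j p h1 h2, sub_self]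
  set v : ((j : Fin r) × Fin (m j)) → ℂ := fun c => D.coeff (linIdx m c + 1) with hv
  have hmul : (Mmat μ m).mulVec v = 0 := by
    funext rq
    obtain ⟨j, q⟩ := rq
    have hq : (q : ℕ) + 1 ≤ m j := q.2
    have horow := horth j ((q : ℕ) + 1) (by omega) hq
    rw [mip_eq_sum hμ j D _ (N + 1) (by omega), Finset.sum_range_succ', h00] at horow
    simp only [zero_mul, add_zero] at horow
    have hrow : ∑ p ∈ Finset.range N,
        mom (μ j) ((p : ℤ) - ((q : ℕ) : ℤ)) * D.coeff (p + 1) = 0 := by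
      rw [← horow]
      refine Finset.sum_congr rfl fun x _ => ?_
      push_cast
      rw [show ((x : ℤ) + 1 - (((q : ℕ) : ℤ) + 1)) = (x : ℤ) - ((q : ℕ) : ℤ) by ring,
        mul_comm]
    have := sum_linIdx m (fun p => mom (μ j) ((p : ℤ) - ((q : ℕ) : ℤ)) * D.coeff (p + 1))
    simp only [Matrix.mulVec, dotProduct, Pi.zero_apply]
    calc ∑ c, Mmat μ m ⟨j, q⟩ c * v c
        = ∑ c : (i : Fin r) × Fin (m i),
            mom (μ j) ((linIdx m c : ℤ) - ((q : ℕ) : ℤ)) * D.coeff (linIdx m c + 1) := rfl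
      _ = ∑ p ∈ Finset.range N,
            mom (μ j) ((p : ℤ) - ((q : ℕ) : ℤ)) * D.coeff (p + 1) := this
      _ = 0 := hrow
  have hv0 : v = 0 := Matrix.eq_zero_of_mulVec_eq_zero hnorm hmul
  have hDzero : D = 0 := by
    ext s
    rcases Nat.eq_zero_or_pos s with rfl | hs
    · simpa using h00
    · by_cases hsN : s ≤ N
      · obtain ⟨c, hc⟩ : ∃ c, linIdx m c = s - 1 := by
          have hmem : s - 1 ∈ Finset.range N := Finset.mem_range.2 (by omega)
          rw [← linIdx_image m, Finset.mem_image] at hmem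
          obtain ⟨c, _, hc⟩ := hmem
          exact ⟨c, hc⟩
        have hc0 := congrFun hv0 c
        rw [hv] at hc0
        simp only [Pi.zero_apply] at hc0
        rw [hc] at hc0
        have : s - 1 + 1 = s := by omega
        rw [this] at hc0
        simpa using hc0
      · rw [Polynomial.coeff_eq_zero_of_natDegree_lt (by omega)]
        simp
  exact sub_eq_zero.mp hDzero

/-- if `n k ≥ 1` and `n`, `n − e_k` are normal, then
`Φ*_n = Φ*_{n−e_k} + β_n z Φ_{n−e_k}` where `β_n` is the `z^{|n|}`-coefficient of `Φ*_n`
(in particular the recurrence coefficient `β_n` does not depend on `k`). -/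
theorem szego_recurrence_typeIIStar (r : ℕ) (hr : 0 < r) (μ : Fin r → Measure ℂ)
    (hμ : MopucSystem μ) (n : Fin r → ℕ) (k : Fin r) (hk : 1 ≤ n k)
    (hnorm : NormalIndex μ n) (hnorm' : NormalIndex μ (eSub n k))
    (Φs : Polynomial ℂ) (hΦs : IsPhiStar μ n Φs)
    (Φs' : Polynomial ℂ) (hΦs' : IsPhiStar μ (eSub n k) Φs')
    (Φ' : Polynomial ℂ) (hΦ' : IsPhi μ (eSub n k) Φ') :
    Φs = Φs' + C (Φs.coeff (∑ j, n j)) * (X * Φ') := by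
  set m := eSub n k with hm
  set N := ∑ j, n j with hNdef
  have hNpos : 1 ≤ N := by
    rw [hNdef, ← Finset.sum_erase_add Finset.univ n (Finset.mem_univ k)]
    omega
  have hsumm : ∑ j, m j = N - 1 := by
    rw [hm]
    unfold eSub
    rw [Finset.sum_update_of_mem (Finset.mem_univ k), Finset.sdiff_singleton_eq_erase,
      hNdef, ← Finset.sum_erase_add Finset.univ n (Finset.mem_univ k)]
    omega
  have hmle : ∀ j, m j ≤ n j := by
    intro j
    rw [hm]
    unfold eSub
    rcases eq_or_ne j k with rfl | hjk
    · rw [Function.update_self]; omega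
    · rw [Function.update_of_ne hjk]
  set β := Φs.coeff N with hβ
  set Q := Φs - C β * (X * Φ') with hQ
  obtain ⟨⟨hΦs_ne, hΦs_deg, hΦs_orth⟩, hΦs_eval⟩ := hΦs
  obtain ⟨⟨hΦ'_ne, hΦ'_degle, hΦ'_orth⟩, hΦ'_mon, hΦ'_nat⟩ := hΦ'
  have hQeval : Q.eval 0 = 1 := by
    rw [hQ]
    simp [hΦs_eval]
  have hQcoeff : ∀ s : ℕ, N ≤ s → Q.coeff s = 0 := by
    intro s hs
    rw [hQ, Polynomial.coeff_sub, Polynomial.coeff_C_mul]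
    obtain ⟨t, rfl⟩ : ∃ t, s = t + 1 := ⟨s - 1, by omega⟩
    rw [Polynomial.coeff_X_mul]
    rcases eq_or_lt_of_le hs with heq | hlt
    · have ht : Φ'.coeff t = 1 := by
        have hteq : t = Φ'.natDegree := by rw [hΦ'_nat, hsumm]; omega
        rw [hteq]
        exact hΦ'_mon
      rw [ht, mul_one, ← heq, ← hβ, sub_self]
    · have h1 : Φs.coeff (t + 1) = 0 :=
        Polynomial.coeff_eq_zero_of_degree_lt
          (lt_of_le_of_lt hΦs_deg (by exact_mod_cast hlt))
      have h2 : Φ'.coeff t = 0 :=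
        Polynomial.coeff_eq_zero_of_natDegree_lt (by rw [hΦ'_nat, hsumm]; omega)
      rw [h1, h2, mul_zero, sub_self]
  have hQdeg : Q.degree ≤ ((∑ j, m j : ℕ) : WithBot ℕ) := by
    rw [Polynomial.degree_le_iff_coeff_zero]
    intro s hsgt
    have hlt : ∑ j, m j < s := by exact_mod_cast hsgt
    exact hQcoeff s (by omega)
  have hQorth : ∀ j, ∀ p : ℕ, 1 ≤ p → p ≤ m j → mip (μ j) Q p = 0 := by
    intro j p h1 h2
    rw [hQ, mip_sub hμ, mip_C_mul hμ]
    obtain ⟨t, rfl⟩ : ∃ t, p = t + 1 := ⟨p - 1, by omega⟩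
    rw [mip_X_mul hμ, hΦs_orth j (t + 1) h1 (h2.trans (hmle j)),
      hΦ'_orth j t (by omega)]
    ring
  have hQne : Q ≠ 0 := by
    intro h
    rw [h] at hQeval
    simp at hQeval
  have hQstar : IsTypeIIStar μ m Q := ⟨hQne, hQdeg, hQorth⟩
  have huniq := typeIIStar_unique hμ m hnorm' Q Φs' hQstar hΦs'.1
    (by rw [hQeval, hΦs'.2])
  rw [hQ] at huniq
  rw [← huniq]
  ring
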